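/- The Shahshahani divergence of the effective replicator field of a finite game equals (1/2) ∑_{i ∈ N} ∑_{α_i ∈ A_i} (u_i(α_i; x_{-i}) − u_i(x)) for every interior mixed profile x. -/

import Mathlib

open Finset

noncomputable section

/-- Full coordinates on the simplex from effective (corner-of-cube) coordinates:
`x_{i,0} = 1 − ∑_k x̃_{i,k}` and `x_{i,k.succ} = x̃_{i,k}`. -/
def fullCoord {ι : Type*} [Fintype ι] (m : ι → ℕ)
    (y : ∀ i, Fin (m i) → ℝ) : ∀ i, Fin (m i + 1) → ℝ :=
  fun i => Fin.cons (1 - ∑ k, y i k) (y i)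

/-- The multilinear mixed extension of player `i`'s payoff function. -/
def mixedPayoff {ι : Type*} [Fintype ι] [DecidableEq ι] (m : ι → ℕ)
    (u : ι → (∀ j, Fin (m j + 1)) → ℝ) (i : ι) (x : ∀ j, Fin (m j + 1) → ℝ) : ℝ :=
  ∑ α : ∀ j, Fin (m j + 1), u i α * ∏ j, x j (α j)

/-- The mixed payoff `u_i(a ; x_{-i})`. -/
def unilateralPayoff {ι : Type*} [Fintype ι] [DecidableEq ι] (m : ι → ℕ)
    (u : ι → (∀ j, Fin (m j + 1)) → ℝ) (i : ι) (a : Fin (m i + 1))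
    (x : ∀ j, Fin (m j + 1) → ℝ) : ℝ :=
  mixedPayoff m u i (Function.update x i (fun b => if b = a then 1 else 0))

/-- The effective payoff field `ṽ_{i,k}(x̃) = u_i(k;x_{-i}) − u_i(0_i;x_{-i})`. -/
def effField {ι : Type*} [Fintype ι] [DecidableEq ι] (m : ι → ℕ)
    (u : ι → (∀ j, Fin (m j + 1)) → ℝ) (i : ι) (k : Fin (m i))
    (y : ∀ j, Fin (m j) → ℝ) : ℝ :=
  unilateralPayoff m u i k.succ (fullCoord m y) -
    unilateralPayoff m u i 0 (fullCoord m y)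

/-- The effective replicator field
`X̃_{i,k}(x̃) = x̃_{i,k} (ṽ_{i,k}(x̃) − ∑_l x̃_{i,l} ṽ_{i,l}(x̃))`. -/
def effReplicator {ι : Type*} [Fintype ι] [DecidableEq ι] (m : ι → ℕ)
    (u : ι → (∀ j, Fin (m j + 1)) → ℝ) (i : ι) (k : Fin (m i))
    (y : ∀ j, Fin (m j) → ℝ) : ℝ :=
  y i k * (effField m u i k y - ∑ l, y i l * effField m u i l y)

/-- `√(det g̃_i)`, the square root of the determinant of the effective Shahshahani
metric of player `i`: `det g̃_i = 1 / (x_{i,0} ∏_k x̃_{i,k})`. -/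
def sqrtDet {ι : Type*} [Fintype ι] (m : ι → ℕ) (i : ι)
    (y : ∀ j, Fin (m j) → ℝ) : ℝ :=
  Real.sqrt (1 / ((1 - ∑ k, y i k) * ∏ k, y i k))

/-- The coordinate direction `(i, k)` in the effective strategy space. -/
def coordDir {ι : Type*} [Fintype ι] [DecidableEq ι] (m : ι → ℕ) (i : ι)
    (k : Fin (m i)) : ∀ j, Fin (m j) → ℝ :=
  Function.update (0 : ∀ j, Fin (m j) → ℝ) i (Pi.single k 1)

/-- The Shahshahani (Riemannian) divergence of the effective replicator field:
`div X̃ = ∑_i (det g̃_i)^{-1/2} ∑_k ∂_{x̃_{i,k}} ((det g̃_i)^{1/2} X̃_{i,k})`. -/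
def shahDiv {ι : Type*} [Fintype ι] [DecidableEq ι] (m : ι → ℕ)
    (u : ι → (∀ j, Fin (m j + 1)) → ℝ) (y : ∀ j, Fin (m j) → ℝ) : ℝ :=
  ∑ i, (sqrtDet m i y)⁻¹ *
    ∑ k, fderiv ℝ (fun z => sqrtDet m i z * effReplicator m u i k z) y (coordDir m i k)

/-! The metric is block-diagonal across players and `ṽ_i` does not depend on player `i`'s own
coordinates, so the divergence splits into one computation per player with `ṽ_i` frozen.
Writing `ρ = (x_{i,0} ∏_k x̃_{i,k})^{-1/2}` for `√(det g̃_i)`, we have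
`ρ⁻¹ ∂_k (ρ X̃_k) = ∂_k X̃_k + X̃_k ∂_k log ρ` with `∂_k log ρ = -(1/x̃_k - 1/x_0)/2`, and summing over `k`
gives `(∑_k ṽ_k - (m_i + 1) ∑_l x̃_l ṽ_l) / 2`. By multilinearity
`u_i(x) = u_i(0_i; x_{-i}) + ∑_l x̃_l ṽ_l`, which turns this into `(1/2) ∑_α (u_i(α; x_{-i}) - u_i(x))`. -/

open Function

section Simplex

variable {n : ℕ}

-- `√(det g̃_i)` on one player's block: `sqrtDet m i y = simplexDensity (y i)`.
def simplexDensity (w : Fin n → ℝ) : ℝ := √(1 / ((1 - ∑ k, w k) * ∏ k, w k))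

-- `X̃_i` with the payoff vector `ṽ_i = v` held fixed.
def replicatorField (v w : Fin n → ℝ) (k : Fin n) : ℝ := w k * (v k - ∑ l, w l * v l)

theorem differentiableAt_simplexDensity {w : Fin n → ℝ} (hD : (1 - ∑ k, w k) * ∏ k, w k ≠ 0) :
    DifferentiableAt ℝ simplexDensity w :=
  DifferentiableAt.sqrt (by fun_prop (disch := exact hD)) (one_div_ne_zero hD)

theorem sum_add_smul_single (w : Fin n → ℝ) (k : Fin n) (t : ℝ) :
    ∑ l, (w + t • Pi.single k 1 : Fin n → ℝ) l = ∑ l, w l + t := by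
  simp [Finset.sum_add_distrib, Pi.single_apply]

theorem prod_add_smul_single (w : Fin n → ℝ) (k : Fin n) (t : ℝ) :
    ∏ l, (w + t • Pi.single k 1 : Fin n → ℝ) l = (w k + t) * ∏ l ∈ univ.erase k, w l := by
  rw [← Finset.mul_prod_erase _ _ (mem_univ k)]
  congr 1
  · simp
  · exact Finset.prod_congr rfl fun l hl => by simp [(mem_erase.1 hl).1]

theorem sum_mul_add_smul_single (v w : Fin n → ℝ) (k : Fin n) (t : ℝ) :
    ∑ l, (w + t • Pi.single k 1 : Fin n → ℝ) l * v l = ∑ l, w l * v l + t * v k := by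
  simp [add_mul, Finset.sum_add_distrib, Pi.single_apply]

theorem hasLineDerivAt_replicatorField (v w : Fin n → ℝ) (k : Fin n) :
    HasLineDerivAt ℝ (fun w => replicatorField v w k) (v k - ∑ l, w l * v l - w k * v k)
      w (Pi.single k 1) := by
  have hline : (fun t : ℝ => replicatorField v (w + t • Pi.single k 1) k) =
      fun t => (w k + t) * (v k - (∑ l, w l * v l + t * v k)) := by
    funext t
    rw [replicatorField, sum_mul_add_smul_single]
    simp
  unfold HasLineDerivAt
  rw [hline]
  refine (((hasDerivAt_id' 0).const_add _).mul
      ((((hasDerivAt_id' 0).mul_const _).const_add _).const_sub _)).congr_deriv ?_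
  ring

theorem hasLineDerivAt_simplexDensity {w : Fin n → ℝ} (hw : ∀ k, 0 < w k)
    (hs : ∑ k, w k < 1) (k : Fin n) :
    HasLineDerivAt ℝ simplexDensity
      (-simplexDensity w / 2 * (1 / w k - 1 / (1 - ∑ l, w l))) w (Pi.single k 1) := by
  set s := 1 - ∑ l, w l with hs_def
  set q := ∏ l ∈ univ.erase k, w l with hq_def
  have hs0 : 0 < s := sub_pos.2 hs
  have hq0 : 0 < q := prod_pos fun l _ => hw l
  have hwk := hw k
  have hD : 0 < s * (w k * q) := by positivity
  have hline : (fun t : ℝ => simplexDensity (w + t • Pi.single k 1)) =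
      fun t => √(((s - t) * ((w k + t) * q))⁻¹) := by
    funext t
    rw [simplexDensity, sum_add_smul_single, prod_add_smul_single, one_div, hs_def, hq_def]
    ring_nf
  have hρ : simplexDensity w = √((s * (w k * q))⁻¹) := by simpa using congrFun hline 0
  have hρ2 : simplexDensity w ^ 2 * (s * (w k * q)) = 1 := by
    rw [hρ, Real.sq_sqrt (by positivity), inv_mul_cancel₀ hD.ne']
  have hρ0 : simplexDensity w ≠ 0 := by rw [hρ]; positivity
  have hDer : HasDerivAt (fun t : ℝ => (s - t) * ((w k + t) * q))
      (-1 * ((w k + 0) * q) + (s - 0) * (1 * q)) 0 :=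
    ((hasDerivAt_id' 0).const_sub s).mul (((hasDerivAt_id' 0).const_add (w k)).mul_const q)
  have hD0 : (s - 0) * ((w k + 0) * q) ≠ 0 := by rw [sub_zero, add_zero]; exact hD.ne'
  unfold HasLineDerivAt
  rw [hline]
  refine ((hDer.inv hD0).sqrt (inv_ne_zero hD0)).congr_deriv ?_
  simp only [Pi.inv_apply, add_zero, sub_zero, ← hρ]
  field_simp
  linear_combination (s - w k) * hρ2

theorem simplexDensity_inv_mul_sum_lineDeriv (v : Fin n → ℝ) {w : Fin n → ℝ}
    (hw : ∀ k, 0 < w k) (hs : ∑ k, w k < 1) :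
    (simplexDensity w)⁻¹ * ∑ k, lineDeriv ℝ (fun w => simplexDensity w * replicatorField v w k)
      w (Pi.single k 1) = (∑ k, v k - (n + 1) * ∑ l, w l * v l) / 2 := by
  set s := 1 - ∑ l, w l with hs_def
  set vbar := ∑ l, w l * v l
  have hs0 : 0 < s := sub_pos.2 hs
  have hp0 : 0 < ∏ k, w k := prod_pos fun k _ => hw k
  have hρ0 : simplexDensity w ≠ 0 := by unfold simplexDensity; positivity
  have hterm : ∀ k, (simplexDensity w)⁻¹ * lineDeriv ℝ
      (fun w => simplexDensity w * replicatorField v w k) w (Pi.single k 1) =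
      (v k - vbar) / 2 - w k * v k + w k * (v k - vbar) / (2 * s) := by
    intro k
    have hmul : HasLineDerivAt ℝ (fun w => simplexDensity w * replicatorField v w k) _ w
        (Pi.single k 1) :=
      (hasLineDerivAt_simplexDensity hw hs k).mul (hasLineDerivAt_replicatorField v w k)
    simp only [zero_smul, add_zero, ← hs_def] at hmul
    rw [hmul.lineDeriv, replicatorField]
    have := (hw k).ne'
    field_simp [hs0.ne']
    ring
  have hweighted : ∑ k, w k * (v k - vbar) = s * vbar := by
    simp only [mul_sub, sum_sub_distrib, ← sum_mul, hs_def]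
    ring
  rw [mul_sum, sum_congr rfl fun k _ => hterm k]
  simp only [sum_add_distrib, sum_sub_distrib, ← sum_div, hweighted, sum_const, card_univ,
    Fintype.card_fin, nsmul_eq_mul]
  field_simp [hs0.ne']
  ring

theorem sum_sub_sum_cons_mul (U : Fin (n + 1) → ℝ) (w : Fin n → ℝ) :
    ∑ a, (U a - ∑ b, (Fin.cons (1 - ∑ l, w l) w : Fin (n + 1) → ℝ) b * U b) =
      ∑ k : Fin n, (U k.succ - U 0) - (n + 1) * ∑ l, w l * (U l.succ - U 0) := by
  simp only [Fin.sum_univ_succ, Fin.cons_zero, Fin.cons_succ, sum_sub_distrib, sum_const,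
    card_univ, Fintype.card_fin, nsmul_eq_mul, mul_sub, ← sum_mul]
  push_cast
  ring

end Simplex

theorem lineDeriv_single {𝕜 ι F : Type*} [NontriviallyNormedField 𝕜] [DecidableEq ι]
    {E : ι → Type*} [∀ i, AddCommGroup (E i)] [∀ i, Module 𝕜 (E i)] [NormedAddCommGroup F]
    [NormedSpace 𝕜 F] (f : (∀ i, E i) → F) (y : ∀ i, E i) (i : ι) (v : E i) :
    lineDeriv 𝕜 f y (Pi.single i v) = lineDeriv 𝕜 (fun w => f (update y i w)) (y i) v := by
  have hline : ∀ t : 𝕜, y + t • Pi.single i v = update y i (y i + t • v) := by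
    intro t; ext j
    rcases eq_or_ne j i with rfl | h
    · simp
    · simp [h]
  simp only [lineDeriv, hline]

section Game

variable {ι : Type*} [Fintype ι] {m : ι → ℕ}

@[fun_prop]
theorem differentiable_fullCoord : Differentiable ℝ (fullCoord m) := by
  refine differentiable_pi.2 fun j => differentiable_pi.2 fun b => ?_
  cases b using Fin.cases with
  | zero => simp only [fullCoord, Fin.cons_zero]; fun_prop
  | succ k => simp only [fullCoord, Fin.cons_succ]; fun_prop

variable [DecidableEq ι]

theorem fullCoord_update (y : ∀ j, Fin (m j) → ℝ) (i : ι) (w : Fin (m i) → ℝ) :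
    fullCoord m (update y i w) = update (fullCoord m y) i (Fin.cons (1 - ∑ k, w k) w) := by
  ext j
  rcases eq_or_ne j i with rfl | h
  · simp [fullCoord]
  · simp [fullCoord, h]

theorem unilateralPayoff_update_self (u : ι → (∀ j, Fin (m j + 1)) → ℝ) (i : ι)
    (a : Fin (m i + 1)) (x : ∀ j, Fin (m j + 1) → ℝ) (e : Fin (m i + 1) → ℝ) :
    unilateralPayoff m u i a (update x i e) = unilateralPayoff m u i a x := by
  simp [unilateralPayoff]

theorem effField_update_self (u : ι → (∀ j, Fin (m j + 1)) → ℝ) (i : ι) (l : Fin (m i))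
    (y : ∀ j, Fin (m j) → ℝ) (w : Fin (m i) → ℝ) :
    effField m u i l (update y i w) = effField m u i l y := by
  simp only [effField, fullCoord_update, unilateralPayoff_update_self]

theorem unilateralPayoff_eq_sum (u : ι → (∀ j, Fin (m j + 1)) → ℝ) (i : ι)
    (a : Fin (m i + 1)) (x : ∀ j, Fin (m j + 1) → ℝ) :
    unilateralPayoff m u i a x = ∑ α : ∀ j, Fin (m j + 1),
      u i α * ((if α i = a then 1 else 0) * ∏ j ∈ univ \ {i}, x j (α j)) := by
  refine sum_congr rfl fun α _ => ?_
  simp only [apply_update (fun j (xj : Fin (m j + 1) → ℝ) => xj (α j)),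
    prod_update_of_mem (mem_univ i)]

theorem mixedPayoff_eq_sum_mul_unilateralPayoff (u : ι → (∀ j, Fin (m j + 1)) → ℝ) (i : ι)
    (x : ∀ j, Fin (m j + 1) → ℝ) :
    mixedPayoff m u i x = ∑ a, x i a * unilateralPayoff m u i a x := by
  simp only [unilateralPayoff_eq_sum, mul_sum]
  rw [sum_comm]
  refine sum_congr rfl fun α _ => ?_
  simp only [mul_left_comm (x i _), mul_ite, mul_zero, ite_mul, zero_mul, sum_ite_eq,
    mem_univ, if_true, one_mul]
  rw [prod_eq_mul_prod_sdiff_singleton_of_mem (mem_univ i) fun j => x j (α j)]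

theorem differentiable_effReplicator (u : ι → (∀ j, Fin (m j + 1)) → ℝ) (i : ι)
    (k : Fin (m i)) : Differentiable ℝ (effReplicator m u i k) := by
  unfold effReplicator effField
  simp only [unilateralPayoff_eq_sum]
  fun_prop

theorem sqrtDet_inv_mul_sum_fderiv (u : ι → (∀ j, Fin (m j + 1)) → ℝ) (y : ∀ j, Fin (m j) → ℝ)
    (i : ι) (hy : ∀ k, 0 < y i k) (hy1 : ∑ k, y i k < 1) :
    (sqrtDet m i y)⁻¹ * ∑ k, fderiv ℝ (fun z => sqrtDet m i z * effReplicator m u i k z) y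
      (coordDir m i k) =
      (∑ k, effField m u i k y - (m i + 1) * ∑ l, y i l * effField m u i l y) / 2 := by
  have hD : (1 - ∑ k, y i k) * ∏ k, y i k ≠ 0 :=
    (mul_pos (sub_pos.2 hy1) (prod_pos fun k _ => hy k)).ne'
  have hfderiv : ∀ k, fderiv ℝ (fun z => sqrtDet m i z * effReplicator m u i k z) y
      (coordDir m i k) = lineDeriv ℝ (fun w => simplexDensity w *
        replicatorField (fun l => effField m u i l y) w k) (y i) (Pi.single k 1) := by
    intro k
    have hρ : DifferentiableAt ℝ (sqrtDet m i) y :=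
      (differentiableAt_simplexDensity hD).comp (f := fun z => z i) y (differentiableAt_apply i y)
    have hdiff : DifferentiableAt ℝ (fun z => sqrtDet m i z * effReplicator m u i k z) y :=
      hρ.mul (differentiable_effReplicator u i k y)
    rw [← hdiff.lineDeriv_eq_fderiv, coordDir, ← Pi.single, lineDeriv_single]
    simp only [sqrtDet, effReplicator, effField_update_self, update_self]
    rfl
  rw [sum_congr rfl fun k _ => hfderiv k]
  exact simplexDensity_inv_mul_sum_lineDeriv _ hy hy1

theorem sum_unilateralPayoff_sub_mixedPayoff (u : ι → (∀ j, Fin (m j + 1)) → ℝ)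
    (y : ∀ j, Fin (m j) → ℝ) (i : ι) :
    ∑ a, (unilateralPayoff m u i a (fullCoord m y) - mixedPayoff m u i (fullCoord m y)) =
      ∑ k, effField m u i k y - (m i + 1) * ∑ l, y i l * effField m u i l y := by
  rw [mixedPayoff_eq_sum_mul_unilateralPayoff]
  exact sum_sub_sum_cons_mul _ (y i)

end Game

/-- **The Shahshahani divergence of the effective replicator field** of a finite game
equals `(1/2) ∑_i ∑_{α_i} (u_i(α_i;x_{-i}) − u_i(x))` at every interior mixed profile. -/
theorem shahshahani_divergence_of_replicator
    {ι : Type*} [Fintype ι] [DecidableEq ι] (m : ι → ℕ)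
    (u : ι → (∀ j, Fin (m j + 1)) → ℝ) (y : ∀ j, Fin (m j) → ℝ)
    (hy : ∀ i k, 0 < y i k) (hy1 : ∀ i, ∑ k, y i k < 1) :
    shahDiv m u y = (1 / 2) * ∑ i, ∑ a : Fin (m i + 1),
      (unilateralPayoff m u i a (fullCoord m y) - mixedPayoff m u i (fullCoord m y)) := by
  rw [shahDiv, mul_sum]
  refine sum_congr rfl fun i _ => ?_
  rw [sqrtDet_inv_mul_sum_fderiv u y i (hy i) (hy1 i), sum_unilateralPayoff_sub_mixedPayoff]
  ring

end
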